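/- arXiv:1702.05424 — 5 statements merged into one kernel-verified Lean document; each statement's English description precedes it below -/
import Mathlib

section
/- Let a > 1 and let t_n be a sequence of nonzero reals tending to 0. Then the closure of the group generated by the matrices [[1,0],[t_n,1]] (n ∈ ℕ) and [[a,0],[0,1]] inside GL(2,ℝ) contains all matrices of the form [[a^n, 0],[t, 1]] with n ∈ ℤ and t ∈ ℝ. -/
/-!
The subgroup generated contains `diag(a, 1) ^ n` and the unipotents `[[1, 0], [t k, 1]]`. The
`s` with `[[1, 0], [s, 1]]` in the group form an additive subgroup of `ℝ` with nonzero elements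
arbitrarily close to `0`, hence a dense one, so every `[[1, 0], [s, 1]]` lies in the closure, and
`[[a ^ n, 0], [s, 1]] = diag(a, 1) ^ n * [[1, 0], [s, 1]]`.
-/

open Filter Topology

theorem AddSubgroup.dense_of_tendsto_zero (S : AddSubgroup ℝ) {t : ℕ → ℝ} (ht0 : ∀ n, t n ≠ 0)
    (htlim : Tendsto t atTop (𝓝 0)) (htS : ∀ n, t n ∈ S) : Dense (S : Set ℝ) := by
  refine S.dense_of_not_isolated_zero fun ε hε => ?_
  obtain ⟨n, hn⟩ := (htlim.abs.eventually (gt_mem_nhds (by simpa using hε))).exists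
  have habs : |t n| ∈ S := by
    rcases abs_choice (t n) with h | h <;> rw [h]
    exacts [htS n, neg_mem (htS n)]
  exact ⟨|t n|, habs, abs_pos.2 (ht0 n), hn⟩

theorem Subgroup.map_mem_closure_of_tendsto_zero {G : Type*} [Group G] [TopologicalSpace G]
    (H : Subgroup G) (φ : Multiplicative ℝ →* G) (hφ : Continuous fun s : ℝ => φ (.ofAdd s))
    {t : ℕ → ℝ} (ht0 : ∀ n, t n ≠ 0) (htlim : Tendsto t atTop (𝓝 0))
    (htH : ∀ n, φ (.ofAdd (t n)) ∈ H) (s : ℝ) :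
    φ (.ofAdd s) ∈ _root_.closure (H : Set G) :=
  map_mem_closure hφ ((H.comap φ).toAddSubgroup'.dense_of_tendsto_zero ht0 htlim htH s)
    fun _ hx => hx

namespace Matrix.GeneralLinearGroup

variable {R : Type*} [Ring R]

def lowerUnipotent : Multiplicative R →* GL (Fin 2) R where
  toFun s := ⟨!![1, 0; s.toAdd, 1], !![1, 0; -s.toAdd, 1], by simp [one_fin_two],
    by simp [one_fin_two]⟩
  map_one' := by ext : 1; simp [one_fin_two]
  map_mul' s s' := by ext : 1; simp

@[simp]
theorem coe_lowerUnipotent (s : R) :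
    (lowerUnipotent (.ofAdd s) : Matrix (Fin 2) (Fin 2) R) = !![1, 0; s, 1] := rfl

theorem continuous_lowerUnipotent [TopologicalSpace R] [ContinuousNeg R] :
    Continuous fun s : R => lowerUnipotent (.ofAdd s) := by
  refine Units.continuous_iff.2 ⟨?_, ?_⟩ <;> refine continuous_matrix fun i j => ?_ <;>
    fin_cases i <;> fin_cases j <;> dsimp [lowerUnipotent] <;> fun_prop

def diagLeft : Rˣ →* GL (Fin 2) R where
  toFun u := ⟨!![(u : R), 0; 0, 1], !![(u⁻¹ : Rˣ), 0; 0, 1], by simp [one_fin_two],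
    by simp [one_fin_two]⟩
  map_one' := by ext : 1; simp [one_fin_two]
  map_mul' u v := by ext : 1; simp

@[simp]
theorem coe_diagLeft (u : Rˣ) : (diagLeft u : Matrix (Fin 2) (Fin 2) R) = !![(u : R), 0; 0, 1] :=
  rfl

theorem coe_diagLeft_mul_lowerUnipotent (u : Rˣ) (s : R) :
    ((diagLeft u * lowerUnipotent (.ofAdd s) : GL (Fin 2) R) : Matrix (Fin 2) (Fin 2) R) =
      !![(u : R), 0; s, 1] := by
  simp

end Matrix.GeneralLinearGroup

open Matrix.GeneralLinearGroup

/-- The closure in GL(2,ℝ) of the group generated by the matrices [[1,0],[tₙ,1]] and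
[[a,0],[0,1]] contains all matrices [[aⁿ,0],[t,1]] with n ∈ ℤ, t ∈ ℝ. -/
theorem closure_contains_fix_line (a : ℝ) (ha : 1 < a) (t : ℕ → ℝ)
    (ht0 : ∀ n, t n ≠ 0) (htlim : Tendsto t atTop (nhds 0)) :
    ∀ (n : ℤ) (s : ℝ) (g : GL (Fin 2) ℝ),
      (g : Matrix (Fin 2) (Fin 2) ℝ) = !![a ^ n, 0; s, 1] →
      g ∈ closure ((Subgroup.closure
        {A : GL (Fin 2) ℝ | (A : Matrix (Fin 2) (Fin 2) ℝ) = !![a, 0; 0, 1] ∨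
          ∃ k : ℕ, (A : Matrix (Fin 2) (Fin 2) ℝ) = !![1, 0; t k, 1]}) :
        Set (GL (Fin 2) ℝ)) := by
  intro n s g hg
  set H := Subgroup.closure {A : GL (Fin 2) ℝ | (A : Matrix (Fin 2) (Fin 2) ℝ) = !![a, 0; 0, 1] ∨
    ∃ k : ℕ, (A : Matrix (Fin 2) (Fin 2) ℝ) = !![1, 0; t k, 1]}
  let u : ℝˣ := .mk0 a (zero_lt_one.trans ha).ne'
  have hdiag : diagLeft u ∈ H := Subgroup.subset_closure (Or.inl rfl)
  have hunip (k : ℕ) : lowerUnipotent (.ofAdd (t k)) ∈ H :=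
    Subgroup.subset_closure (Or.inr ⟨k, rfl⟩)
  have hg' : g = diagLeft (u ^ n) * lowerUnipotent (.ofAdd s) := by
    ext : 1
    rw [hg, coe_diagLeft_mul_lowerUnipotent, Units.val_zpow_eq_zpow_val, Units.val_mk0]
  rw [hg', map_zpow, ← H.topologicalClosure_coe]
  exact mul_mem (H.le_topologicalClosure (zpow_mem hdiag n))
    (H.map_mem_closure_of_tendsto_zero _ continuous_lowerUnipotent ht0 htlim hunip s)
end

section
/- Let W be a 2-dimensional real vector space and v ∈ W a nonzero vector. Let f_1, f_2 be linear automorphisms of W with positive determinant that fix v, and suppose f_1, f_2 have eigenvectors w_1, w_2 respectively, with w_1, w_2 linearly independent, and corresponding eigenvalues a_1 > 1 and a_2 > 1. Then the closure in GL(W) of the group generated by f_1 and f_2 contains Fix(v, a_1) and Fix(v, a_2), where Fix(v, a) denotes the group of linear maps fixing v whose determinant equals a^n for some integer n. -/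
open Module

variable {W : Type*} [NormedAddCommGroup W] [NormedSpace ℝ W]

/-- `Fix v a`: invertible continuous linear maps of `W` fixing `v` whose determinant
is an integer power of `a`. -/
noncomputable def FixGrp (v : W) (a : ℝ) : Set (W →L[ℝ] W)ˣ :=
  {g | (g : W →L[ℝ] W) v = v ∧
    ∃ n : ℤ, LinearMap.det ((g : W →L[ℝ] W) : W →ₗ[ℝ] W) = a ^ n}

section Aux
variable {W : Type*} [NormedAddCommGroup W] [NormedSpace ℝ W] [FiniteDimensional ℝ W]
variable (b : Basis (Fin 2) ℝ W)

noncomputable def Tc (c d : ℝ) : W →L[ℝ] W :=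
  LinearMap.toContinuousLinearMap (b.constr ℝ ![b 0, c • b 0 + d • b 1])

@[simp] lemma Tc_apply0 (c d : ℝ) : Tc b c d (b 0) = b 0 := by
  simp [Tc, Basis.constr_basis]

@[simp] lemma Tc_apply1 (c d : ℝ) : Tc b c d (b 1) = c • b 0 + d • b 1 := by
  have := b.constr_basis ℝ ![b 0, c • b 0 + d • b 1] 1
  simpa [Tc] using this

lemma Tc_mul (c d c' d' : ℝ) :
    Tc b c d * Tc b c' d' = Tc b (c' + c * d') (d * d') := by
  apply ContinuousLinearMap.coe_injective
  apply b.ext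
  intro i
  fin_cases i <;>
    simp [ContinuousLinearMap.mul_apply, map_add, map_smul] <;> module

lemma Tc_zero_one : Tc b 0 1 = 1 := by
  apply ContinuousLinearMap.coe_injective
  apply b.ext
  intro i
  fin_cases i <;> simp

/-- The unit with value `Tc c d`. -/
noncomputable def Uu (c : ℝ) (d : ℝˣ) : (W →L[ℝ] W)ˣ where
  val := Tc b c d
  inv := Tc b (-c / d) ((d⁻¹ : ℝˣ) : ℝ)
  val_inv := by
    rw [Tc_mul]
    have h1 : -c / (d : ℝ) + c * ((d⁻¹ : ℝˣ) : ℝ) = 0 := by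
      rw [Units.val_inv_eq_inv_val]
      field_simp
      ring
    have h2 : (d : ℝ) * ((d⁻¹ : ℝˣ) : ℝ) = 1 := by
      rw [Units.val_inv_eq_inv_val]; field_simp
    rw [h1, h2, Tc_zero_one]
  inv_val := by
    rw [Tc_mul]
    have h1 : c + -c / (d : ℝ) * (d : ℝ) = 0 := by field_simp; ring
    have h2 : ((d⁻¹ : ℝˣ) : ℝ) * (d : ℝ) = 1 := by
      rw [Units.val_inv_eq_inv_val]; field_simp
    rw [h1, h2, Tc_zero_one]

@[simp] lemma Uu_val (c : ℝ) (d : ℝˣ) : ((Uu b c d : (W →L[ℝ] W)ˣ) : W →L[ℝ] W) = Tc b c d := rfl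

lemma Uu_mul (c c' : ℝ) (d d' : ℝˣ) :
    Uu b c d * Uu b c' d' = Uu b (c' + c * d') (d * d') := by
  apply Units.ext
  push_cast [Uu_val]
  rw [Tc_mul]

lemma Uu_inv (c : ℝ) (d : ℝˣ) : (Uu b c d)⁻¹ = Uu b (-c / d) d⁻¹ := Units.ext rfl

lemma Uu_one : Uu b 0 1 = 1 := by
  apply Units.ext
  simp [Tc_zero_one]

lemma det_Tc (c d : ℝ) : LinearMap.det ((Tc b c d : W →L[ℝ] W) : W →ₗ[ℝ] W) = d := by
  rw [← LinearMap.det_toMatrix b]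
  have hM : LinearMap.toMatrix b b ((Tc b c d : W →L[ℝ] W) : W →ₗ[ℝ] W) = !![1, c; 0, d] := by
    ext i j
    rw [LinearMap.toMatrix_apply]
    fin_cases i <;> fin_cases j <;>
      simp [Tc_apply0, Tc_apply1, map_add, map_smul, Basis.repr_self, Finsupp.single_apply]
  rw [hM, Matrix.det_fin_two]
  simp

end Aux

section Aux2
variable {W : Type*} [NormedAddCommGroup W] [NormedSpace ℝ W] [FiniteDimensional ℝ W]
variable (b : Basis (Fin 2) ℝ W)

/-- Translations as a monoid hom from `Multiplicative ℝ`. -/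
noncomputable def transHom : Multiplicative ℝ →* (W →L[ℝ] W)ˣ where
  toFun c := Uu b (Multiplicative.toAdd c) 1
  map_one' := by simpa using Uu_one b
  map_mul' c c' := by
    rw [Uu_mul]
    show Uu b (Multiplicative.toAdd (c * c')) 1 = _
    congr 1
    · rw [toAdd_mul, Units.val_one]; ring
    · rw [mul_one]

lemma Uu_trans_zpow (c : ℝ) (m : ℤ) : (Uu b c 1) ^ m = Uu b (m * c) 1 := by
  have h := (transHom b).map_zpow (Multiplicative.ofAdd c) m
  have h2 : (Multiplicative.ofAdd c) ^ m = Multiplicative.ofAdd ((m : ℝ) * c) := by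
    rw [← ofAdd_zsmul]
    norm_num
  rw [h2] at h
  simpa [transHom] using h.symm

/-- Diagonal maps as a monoid hom from `ℝˣ`. -/
noncomputable def diagHom : ℝˣ →* (W →L[ℝ] W)ˣ where
  toFun d := Uu b 0 d
  map_one' := Uu_one b
  map_mul' d d' := by rw [Uu_mul]; norm_num

lemma Uu_diag_zpow (d : ℝˣ) (n : ℤ) : (Uu b 0 d) ^ n = Uu b 0 (d ^ n) := by
  have h := (diagHom b).map_zpow d n
  simpa [diagHom] using h.symm

lemma Uu_conj (x : ℝ) (d : ℝˣ) :
    Uu b 0 d * Uu b x 1 * (Uu b 0 d)⁻¹ = Uu b (x / d) 1 := by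
  rw [Uu_inv, Uu_mul, Uu_mul]
  congr 1
  · have hd : (d : ℝ) ≠ 0 := d.ne_zero
    push_cast
    field_simp
    ring
  · simp

lemma continuous_trans : Continuous fun c : ℝ => (Uu b c 1 : (W →L[ℝ] W)ˣ) := by
  have hkey : ∀ c : ℝ, Tc b c 1 = Tc b 0 1 + c • (Tc b 1 1 - Tc b 0 1) := by
    intro c
    apply ContinuousLinearMap.coe_injective
    apply b.ext
    intro i
    fin_cases i <;> simp <;> module
  rw [Units.continuous_iff]
  constructor
  · have h1 : (Units.val ∘ fun c : ℝ => (Uu b c 1 : (W →L[ℝ] W)ˣ)) =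
        fun c : ℝ => Tc b 0 1 + c • (Tc b 1 1 - Tc b 0 1) := by
      funext c
      rw [Function.comp_apply, Uu_val, Units.val_one, hkey c]
    rw [h1]
    fun_prop
  · have h2 : (fun c : ℝ => (((Uu b c 1)⁻¹ : (W →L[ℝ] W)ˣ) : W →L[ℝ] W)) =
        fun c : ℝ => Tc b 0 1 + (-c) • (Tc b 1 1 - Tc b 0 1) := by
      funext c
      have : ((Uu b c 1)⁻¹ : (W →L[ℝ] W)ˣ) = Uu b (-c) 1 := by
        rw [Uu_inv]; norm_num
      rw [this, Uu_val, Units.val_one, hkey (-c)]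
    rw [h2]
    fun_prop

/-- Any unit fixing `b 0` is of the form `Uu c d` with `d` its determinant. -/
lemma unit_eq_Uu (g : (W →L[ℝ] W)ˣ) (hg : (g : W →L[ℝ] W) (b 0) = b 0)
    (d : ℝˣ) (hd : LinearMap.det (((g : W →L[ℝ] W)) : W →ₗ[ℝ] W) = (d : ℝ)) :
    g = Uu b (b.repr ((g : W →L[ℝ] W) (b 1)) 0) d := by
  set c := b.repr ((g : W →L[ℝ] W) (b 1)) 0 with hc
  set e := b.repr ((g : W →L[ℝ] W) (b 1)) 1 with he
  have hrep : (g : W →L[ℝ] W) (b 1) = c • b 0 + e • b 1 := by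
    have := b.sum_repr ((g : W →L[ℝ] W) (b 1))
    rw [Fin.sum_univ_two] at this
    exact this.symm
  have hval : (g : W →L[ℝ] W) = Tc b c e := by
    apply ContinuousLinearMap.coe_injective
    apply b.ext
    intro i
    fin_cases i <;> simp [hg, hrep]
  have hde : e = (d : ℝ) := by
    rw [← hd, hval, det_Tc]
  apply Units.ext
  rw [Uu_val, hval, hde]

end Aux2

set_option maxHeartbeats 1000000 in
/-- If f₁, f₂ fix v, have positive determinant, and have independent eigenvectors with
eigenvalues a₁, a₂ > 1, then the closure of ⟨f₁, f₂⟩ contains Fix(v,a₁) and Fix(v,a₂). -/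
theorem fix_subsets_of_closure [FiniteDimensional ℝ W] (hW : finrank ℝ W = 2)
    (v : W) (hv : v ≠ 0) (f₁ f₂ : (W →L[ℝ] W)ˣ)
    (hfix₁ : (f₁ : W →L[ℝ] W) v = v) (hfix₂ : (f₂ : W →L[ℝ] W) v = v)
    (hdet₁ : 0 < LinearMap.det ((f₁ : W →L[ℝ] W) : W →ₗ[ℝ] W))
    (hdet₂ : 0 < LinearMap.det ((f₂ : W →L[ℝ] W) : W →ₗ[ℝ] W))
    (w₁ w₂ : W) (hind : LinearIndependent ℝ ![w₁, w₂]) (a₁ a₂ : ℝ)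
    (ha₁ : 1 < a₁) (ha₂ : 1 < a₂)
    (heig₁ : (f₁ : W →L[ℝ] W) w₁ = a₁ • w₁) (heig₂ : (f₂ : W →L[ℝ] W) w₂ = a₂ • w₂) :
    FixGrp v a₁ ∪ FixGrp v a₂ ⊆
      closure ((Subgroup.closure {f₁, f₂} : Subgroup (W →L[ℝ] W)ˣ) : Set (W →L[ℝ] W)ˣ) := by
  have ha₁0 : (0:ℝ) < a₁ := lt_trans one_pos ha₁
  have ha₂0 : (0:ℝ) < a₂ := lt_trans one_pos ha₂
  have hw₁ : w₁ ≠ 0 := by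
    have := hind.ne_zero 0; simpa using this
  have hw₂ : w₂ ≠ 0 := by
    have := hind.ne_zero 1; simpa using this
  -- v, w₁ are independent
  have hli : LinearIndependent ℝ ![v, w₁] := by
    rw [linearIndependent_fin2]
    refine ⟨by simpa using hw₁, fun a ha => ?_⟩
    simp only [Matrix.cons_val_one, Matrix.head_cons, Matrix.cons_val_zero] at ha
    -- a • w₁ = v ; apply f₁
    have h2 : a • a₁ • w₁ = a • w₁ := by
      have h := congrArg (f₁ : W →L[ℝ] W) ha
      rw [map_smul, heig₁, hfix₁] at h
      rw [h]
      exact ha.symm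
    have h3 : (a * a₁ - a) • w₁ = 0 := by
      rw [sub_smul, ← smul_smul, h2, sub_self]
    have ha0 : a = 0 := by
      rcases smul_eq_zero.1 h3 with h | h
      · have h' : a * (a₁ - 1) = 0 := by linear_combination h
        rcases mul_eq_zero.1 h' with h'' | h''
        · exact h''
        · linarith
      · exact absurd h hw₁
    rw [ha0, zero_smul] at ha
    exact hv ha.symm
  set b : Basis (Fin 2) ℝ W :=
    basisOfLinearIndependentOfCardEqFinrank hli (by simp [hW]) with hbdef
  have hb : ⇑b = ![v, w₁] := coe_basisOfLinearIndependentOfCardEqFinrank hli (by simp [hW])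
  have hb0 : b 0 = v := by rw [hb]; rfl
  have hb1 : b 1 = w₁ := by rw [hb]; rfl
  set A₁ : ℝˣ := Units.mk0 a₁ (ne_of_gt ha₁0) with hA₁
  set A₂ : ℝˣ := Units.mk0 a₂ (ne_of_gt ha₂0) with hA₂
  -- f₁ is diagonal
  have hf₁ : f₁ = Uu b 0 A₁ := by
    apply Units.ext
    apply ContinuousLinearMap.coe_injective
    apply b.ext
    intro i
    fin_cases i
    · show (f₁ : W →L[ℝ] W) (b 0) = Tc b 0 (A₁ : ℝ) (b 0)
      rw [Tc_apply0, hb0, hfix₁]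
    · show (f₁ : W →L[ℝ] W) (b 1) = Tc b 0 (A₁ : ℝ) (b 1)
      rw [Tc_apply1, hb1, heig₁]
      simp [hA₁]
  -- coordinates of w₂
  set α : ℝ := b.repr w₂ 0 with hαdef
  set β : ℝ := b.repr w₂ 1 with hβdef
  have hw₂rep : w₂ = α • v + β • w₁ := by
    have h := b.sum_repr w₂
    rw [Fin.sum_univ_two] at h
    rw [← hb0, ← hb1]
    exact h.symm
  have huniq : ∀ x y x' y' : ℝ, x • v + y • w₁ = x' • v + y' • w₁ → x = x' ∧ y = y' := by
    intro x y x' y' hxy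
    rw [← hb0, ← hb1] at hxy
    have h0 := congrArg (fun z => b.repr z 0) hxy
    have h1 := congrArg (fun z => b.repr z 1) hxy
    simp [map_add, map_smul, Basis.repr_self, Finsupp.single_apply] at h0 h1
    exact ⟨h0, h1⟩
  have hβ0 : β ≠ 0 := by
    intro h
    have hw2v : w₂ = α • v := by rw [hw₂rep, h, zero_smul, add_zero]
    have h2 : (f₂ : W →L[ℝ] W) w₂ = w₂ := by
      conv_lhs => rw [hw2v, map_smul, hfix₂]
      exact hw2v.symm
    rw [heig₂] at h2
    have h3 : (a₂ - 1) • w₂ = 0 := by rw [sub_smul, h2, one_smul, sub_self]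
    rcases smul_eq_zero.1 h3 with h' | h'
    · have : a₂ = 1 := by linarith
      linarith
    · exact hw₂ h'
  have hα0 : α ≠ 0 := by
    intro h
    have hw2w1 : w₂ = β • w₁ := by rw [hw₂rep, h, zero_smul, zero_add]
    have h2 := (linearIndependent_fin2.1 hind).2 β⁻¹
    simp only [Matrix.cons_val_one, Matrix.head_cons, Matrix.cons_val_zero] at h2
    exact h2 (by rw [hw2w1, smul_smul, inv_mul_cancel₀ hβ0, one_smul])
  -- coordinates of f₂ w₁
  set p : ℝ := b.repr ((f₂ : W →L[ℝ] W) w₁) 0 with hpdef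
  set q : ℝ := b.repr ((f₂ : W →L[ℝ] W) w₁) 1 with hqdef
  have hf₂w₁ : (f₂ : W →L[ℝ] W) w₁ = p • v + q • w₁ := by
    have h := b.sum_repr ((f₂ : W →L[ℝ] W) w₁)
    rw [Fin.sum_univ_two] at h
    rw [hb0, hb1] at h
    exact h.symm
  have e1 : (f₂ : W →L[ℝ] W) w₂ = (α + β * p) • v + (β * q) • w₁ := by
    rw [hw₂rep, map_add, map_smul, map_smul, hfix₂, hf₂w₁]
    module
  have e2 : (f₂ : W →L[ℝ] W) w₂ = (a₂ * α) • v + (a₂ * β) • w₁ := by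
    rw [heig₂, hw₂rep]
    module
  obtain ⟨hc0, hc1⟩ := huniq _ _ _ _ (e1.symm.trans e2)
  have hqa : q = a₂ := by
    have h : q * β = a₂ * β := by linear_combination hc1
    exact mul_right_cancel₀ hβ0 h
  have hp0 : p ≠ 0 := by
    intro h
    rw [h, mul_zero, add_zero] at hc0
    have h' : (a₂ - 1) * α = 0 := by linear_combination -hc0
    rcases mul_eq_zero.1 h' with h'' | h''
    · linarith
    · exact hα0 h''
  have hf₂ : f₂ = Uu b p A₂ := by
    apply Units.ext
    apply ContinuousLinearMap.coe_injective
    apply b.ext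
    intro i
    fin_cases i
    · show (f₂ : W →L[ℝ] W) (b 0) = Tc b p (A₂ : ℝ) (b 0)
      rw [Tc_apply0, hb0, hfix₂]
    · show (f₂ : W →L[ℝ] W) (b 1) = Tc b p (A₂ : ℝ) (b 1)
      rw [Tc_apply1, hb0, hb1, hf₂w₁, hqa]
      simp [hA₂]
  -- the subgroup and its closure
  set S₀ : Subgroup (W →L[ℝ] W)ˣ := Subgroup.closure {f₁, f₂} with hS₀
  have hf₁S : f₁ ∈ S₀ := Subgroup.subset_closure (by simp)
  have hf₂S : f₂ ∈ S₀ := Subgroup.subset_closure (by simp)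
  set t₀ : ℝ := p * (a₁ - 1) / (a₂ * a₁) with ht₀def
  have ht₀ : t₀ ≠ 0 := by
    apply div_ne_zero
    · exact mul_ne_zero hp0 (by intro h; apply hp0; nlinarith)
    · positivity
  have hcommS : f₂ * f₁ * f₂⁻¹ * f₁⁻¹ ∈ S₀ :=
    S₀.mul_mem (S₀.mul_mem (S₀.mul_mem hf₂S hf₁S) (S₀.inv_mem hf₂S)) (S₀.inv_mem hf₁S)
  have hcomm : f₂ * f₁ * f₂⁻¹ * f₁⁻¹ = Uu b t₀ 1 := by
    rw [hf₁, hf₂, Uu_inv, Uu_inv, Uu_mul, Uu_mul, Uu_mul]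
    congr 1
    · rw [ht₀def, hA₁, hA₂]
      simp only [Units.val_inv_eq_inv_val, Units.val_mk0]
      field_simp
      ring
    · rw [mul_comm A₂ A₁]
      group
  have hUmem : ∀ (m : ℤ) (k : ℕ), Uu b ((m * t₀) / a₁ ^ k) 1 ∈ S₀ := by
    intro m k
    have hmem : f₁ ^ (k : ℤ) * (f₂ * f₁ * f₂⁻¹ * f₁⁻¹) ^ m * (f₁ ^ (k : ℤ))⁻¹ ∈ S₀ :=
      S₀.mul_mem (S₀.mul_mem (S₀.zpow_mem hf₁S _) (S₀.zpow_mem hcommS _))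
        (S₀.inv_mem (S₀.zpow_mem hf₁S _))
    have hval : ((A₁ ^ (k : ℤ) : ℝˣ) : ℝ) = a₁ ^ k := by
      rw [Units.val_zpow_eq_zpow_val, hA₁, Units.val_mk0, zpow_natCast]
    have heq : f₁ ^ (k : ℤ) * (f₂ * f₁ * f₂⁻¹ * f₁⁻¹) ^ m * (f₁ ^ (k : ℤ))⁻¹ =
        Uu b ((m * t₀) / ((A₁ ^ (k : ℤ) : ℝˣ) : ℝ)) 1 := by
      rw [hcomm, hf₁, Uu_diag_zpow, Uu_trans_zpow, Uu_conj]
    rw [← hval, ← heq]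
    exact hmem
  set T : Subgroup (W →L[ℝ] W)ˣ := S₀.topologicalClosure with hTdef
  have htrans : ∀ x : ℝ, Uu b x 1 ∈ T := by
    intro x
    set c : ℕ → ℝ := fun k => ((round (x * a₁ ^ k / t₀) : ℤ) : ℝ) * t₀ / a₁ ^ k with hcdef
    have hck : Filter.Tendsto c Filter.atTop (nhds x) := by
      have hbound : ∀ k : ℕ, ‖c k - x‖ ≤ (|t₀| / 2) * a₁⁻¹ ^ k := by
        intro k
        have hak : (0 : ℝ) < a₁ ^ k := pow_pos ha₁0 k
        have h1 : c k - x =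
            (((round (x * a₁ ^ k / t₀) : ℤ) : ℝ) - x * a₁ ^ k / t₀) * t₀ / a₁ ^ k := by
          rw [hcdef]
          field_simp
        rw [h1, Real.norm_eq_abs, abs_div, abs_mul]
        have h2 : |((round (x * a₁ ^ k / t₀) : ℤ) : ℝ) - x * a₁ ^ k / t₀| ≤ 1 / 2 := by
          rw [abs_sub_comm]
          exact abs_sub_round _
        have h3 : |a₁ ^ k| = a₁ ^ k := abs_of_pos hak
        rw [h3]
        rw [div_le_iff₀ hak]
        calc |((round (x * a₁ ^ k / t₀) : ℤ) : ℝ) - x * a₁ ^ k / t₀| * |t₀|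
            ≤ (1 / 2) * |t₀| := by
              apply mul_le_mul_of_nonneg_right h2 (abs_nonneg _)
          _ = |t₀| / 2 * (a₁⁻¹ ^ k * a₁ ^ k) := by
              rw [inv_pow, inv_mul_cancel₀ (ne_of_gt hak)]
              ring
          _ = |t₀| / 2 * a₁⁻¹ ^ k * a₁ ^ k := by ring
      have hgeo : Filter.Tendsto (fun k : ℕ => (|t₀| / 2) * a₁⁻¹ ^ k)
          Filter.atTop (nhds 0) := by
        have h0 : (0 : ℝ) ≤ a₁⁻¹ := by positivity
        have h1 : a₁⁻¹ < 1 := by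
          rw [inv_lt_one_iff₀]
          right; exact ha₁
        have := (tendsto_pow_atTop_nhds_zero_of_lt_one h0 h1).const_mul (|t₀| / 2)
        simpa using this
      have hsq := squeeze_zero_norm hbound hgeo
      have := hsq.add_const x
      simpa using this
    have htend : Filter.Tendsto (fun k => Uu b (c k) 1) Filter.atTop
        (nhds (Uu b x 1)) := ((continuous_trans b).tendsto x).comp hck
    have : Uu b x 1 ∈ closure (S₀ : Set (W →L[ℝ] W)ˣ) := by
      apply mem_closure_of_tendsto htend
      filter_upwards with k
      exact hUmem (round (x * a₁ ^ k / t₀)) k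
    exact this
  have hf₁T : f₁ ∈ T := S₀.le_topologicalClosure hf₁S
  have hf₂T : f₂ ∈ T := S₀.le_topologicalClosure hf₂S
  have hD₁ : Uu b 0 A₁ ∈ T := hf₁ ▸ hf₁T
  have hD₂ : Uu b 0 A₂ ∈ T := by
    have h : Uu b 0 A₂ = f₂ * (Uu b p 1)⁻¹ := by
      rw [eq_mul_inv_iff_mul_eq, hf₂, Uu_mul]
      congr 1
      · simp
      · simp
    rw [h]
    exact T.mul_mem hf₂T (T.inv_mem (htrans p))
  -- final goal
  intro g hg
  have hsplit : ∀ (cg : ℝ) (D : ℝˣ), Uu b cg D = Uu b 0 D * Uu b cg 1 := by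
    intro cg D
    rw [Uu_mul]
    congr 1
    · simp
    · simp
  rcases hg with hg | hg
  · obtain ⟨hgv, n, hgdet⟩ := hg
    have hd : LinearMap.det (((g : W →L[ℝ] W)) : W →ₗ[ℝ] W) = ((A₁ ^ n : ℝˣ) : ℝ) := by
      rw [hgdet, Units.val_zpow_eq_zpow_val, hA₁, Units.val_mk0]
    have hgU := unit_eq_Uu b g (by rw [hb0]; exact hgv) (A₁ ^ n) hd
    have hgT : g ∈ T := by
      rw [hgU, hsplit, ← Uu_diag_zpow]
      exact T.mul_mem (T.zpow_mem hD₁ n) (htrans _)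
    exact hgT
  · obtain ⟨hgv, n, hgdet⟩ := hg
    have hd : LinearMap.det (((g : W →L[ℝ] W)) : W →ₗ[ℝ] W) = ((A₂ ^ n : ℝˣ) : ℝ) := by
      rw [hgdet, Units.val_zpow_eq_zpow_val, hA₂, Units.val_mk0]
    have hgU := unit_eq_Uu b g (by rw [hb0]; exact hgv) (A₂ ^ n) hd
    have hgT : g ∈ T := by
      rw [hgU, hsplit, ← Uu_diag_zpow]
      exact T.mul_mem (T.zpow_mem hD₂ n) (htrans _)
    exact hgT
end

section
/- Let W be a 2-dimensional real vector space, v_1, v_2 ∈ W linearly independent vectors, and a_1, a_2 > 0 such that the multiplicative subgroup of ℝ>0 generated by a_1 and a_2 is dense in ℝ>0. Then the closure of the subgroup of GL(W) generated by Fix(v_1, a_1) and Fix(v_2, a_2) equals GL⁺(W), the group of linear automorphisms of W with positive determinant. -/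
open Module

variable {W : Type*} [NormedAddCommGroup W] [NormedSpace ℝ W]

/-! ### Auxiliary material -/

/-- Elementary upper unipotent matrix as a unit. -/
noncomputable def uU (t : ℝ) : (Matrix (Fin 2) (Fin 2) ℝ)ˣ :=
  ⟨!![1, t; 0, 1], !![1, -t; 0, 1],
    by rw [Matrix.mul_fin_two, Matrix.one_fin_two]; norm_num,
    by rw [Matrix.mul_fin_two, Matrix.one_fin_two]; norm_num⟩

/-- Elementary lower unipotent matrix as a unit. -/
noncomputable def lU (t : ℝ) : (Matrix (Fin 2) (Fin 2) ℝ)ˣ :=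
  ⟨!![1, 0; t, 1], !![1, 0; -t, 1],
    by rw [Matrix.mul_fin_two, Matrix.one_fin_two]; norm_num,
    by rw [Matrix.mul_fin_two, Matrix.one_fin_two]; norm_num⟩

/-- Diagonal matrix as a unit. -/
noncomputable def dU (x y : ℝ) (hx : x ≠ 0) (hy : y ≠ 0) : (Matrix (Fin 2) (Fin 2) ℝ)ˣ :=
  ⟨!![x, 0; 0, y], !![x⁻¹, 0; 0, y⁻¹],
    by rw [Matrix.mul_fin_two, Matrix.one_fin_two]; field_simp; simp,
    by rw [Matrix.mul_fin_two, Matrix.one_fin_two]; field_simp; simp⟩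

@[simp] lemma uU_val (t : ℝ) : (uU t).val = !![1, t; 0, 1] := rfl
@[simp] lemma lU_val (t : ℝ) : (lU t).val = !![1, 0; t, 1] := rfl
@[simp] lemma dU_val (x y : ℝ) (hx : x ≠ 0) (hy : y ≠ 0) :
    (dU x y hx hy).val = !![x, 0; 0, y] := rfl

/-- `diag(μ, μ⁻¹)` is a product of elementary unipotent matrices. -/
lemma dU_sl (μ : ℝ) (hμ : μ ≠ 0) :
    dU μ μ⁻¹ hμ (inv_ne_zero hμ) = uU μ * lU (-μ⁻¹) * uU μ * uU (-1) * lU 1 * uU (-1) := by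
  ext : 1
  show (!![μ,0;0,μ⁻¹] : Matrix (Fin 2) (Fin 2) ℝ)
      = !![1,μ;0,1] * !![1,0;-μ⁻¹,1] * !![1,μ;0,1] * !![1,(-1:ℝ);0,1] * !![1,0;1,1] * !![1,-1;0,1]
  simp only [Matrix.mul_fin_two]
  norm_num
  field_simp
  refine ⟨⟨?_, ?_⟩, ?_, ?_⟩ <;> ring

/-- `-1` is a product of elementary unipotent matrices. -/
lemma dU_negone :
    dU (-1) (-1) (by norm_num) (by norm_num) = (uU 1 * lU (-1) * uU 1) ^ 2 := by
  ext : 1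
  show (!![(-1:ℝ),0;0,-1] : Matrix (Fin 2) (Fin 2) ℝ)
      = (!![1,1;0,1] * !![1,0;-1,1] * !![1,1;0,1]) ^ 2
  simp only [pow_two, Matrix.mul_fin_two]
  norm_num

/-- LDU-type decomposition of a 2×2 matrix. -/
lemma matrix_decomp (p q r s t₀ : ℝ) (hp' : p + q * t₀ ≠ 0) :
    !![p, q; r, s] =
      !![1, 0; (r + s * t₀) / (p + q * t₀), 1] *
        !![p + q * t₀, 0; 0, (p * s - q * r) / (p + q * t₀)] *
        !![1, q / (p + q * t₀); 0, 1] * !![1, 0; -t₀, 1] := by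
  rw [Matrix.mul_fin_two, Matrix.mul_fin_two, Matrix.mul_fin_two]
  ext i j
  fin_cases i <;> fin_cases j <;> simp <;> (try field_simp) <;> (try ring)
  all_goals have h' : t₀ * q + p ≠ 0 := by rwa [add_comm, mul_comm]
  · linear_combination (-r) * mul_inv_cancel₀ h'
  · linear_combination (-s) * mul_inv_cancel₀ h'

section Basis

variable [FiniteDimensional ℝ W]

/-- The multiplicative equivalence between 2×2 matrices and continuous endomorphisms of `W`
attached to a basis. -/
noncomputable def matEquiv (b : Basis (Fin 2) ℝ W) :
    Matrix (Fin 2) (Fin 2) ℝ ≃* (W →L[ℝ] W) :=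
  ((Matrix.toLinAlgEquiv b).trans
    (Module.End.toContinuousLinearMap (𝕜 := ℝ) W)).toRingEquiv.toMulEquiv

/-- `Phi b` : units of matrices to units of continuous endomorphisms. -/
noncomputable def Phi (b : Basis (Fin 2) ℝ W) :
    (Matrix (Fin 2) (Fin 2) ℝ)ˣ ≃* (W →L[ℝ] W)ˣ :=
  Units.mapEquiv (matEquiv b)

lemma Phi_val (b : Basis (Fin 2) ℝ W) (M : (Matrix (Fin 2) (Fin 2) ℝ)ˣ) :
    ((Phi b M : W →L[ℝ] W) : W →ₗ[ℝ] W) = Matrix.toLinAlgEquiv b M.val := rfl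

lemma Phi_det (b : Basis (Fin 2) ℝ W) (M : (Matrix (Fin 2) (Fin 2) ℝ)ˣ) :
    LinearMap.det ((Phi b M : W →L[ℝ] W) : W →ₗ[ℝ] W) = M.val.det := by
  rw [Phi_val, show Matrix.toLinAlgEquiv b M.val = Matrix.toLin b b M.val from rfl,
    LinearMap.det_toLin]

lemma Phi_apply (b : Basis (Fin 2) ℝ W) (M : (Matrix (Fin 2) (Fin 2) ℝ)ˣ) (i : Fin 2) :
    (Phi b M : W →L[ℝ] W) (b i) = ∑ j, M.val j i • b j :=
  Matrix.toLinAlgEquiv_self b M.val i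

/-- The linear map version, used for continuity. -/
noncomputable def matLin (b : Basis (Fin 2) ℝ W) :
    Matrix (Fin 2) (Fin 2) ℝ →ₗ[ℝ] (W →L[ℝ] W) :=
  (LinearMap.toContinuousLinearMap.toLinearMap).comp (Matrix.toLinAlgEquiv b).toLinearMap

lemma matLin_cont (b : Basis (Fin 2) ℝ W) : Continuous (matLin b) :=
  LinearMap.continuous_of_finiteDimensional _

lemma Phi_val' (b : Basis (Fin 2) ℝ W) (M : (Matrix (Fin 2) (Fin 2) ℝ)ˣ) :
    (Phi b M : W →L[ℝ] W) = matLin b M.val := rfl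

lemma Phi_inv_val' (b : Basis (Fin 2) ℝ W) (M : (Matrix (Fin 2) (Fin 2) ℝ)ˣ) :
    ((Phi b M)⁻¹ : (W →L[ℝ] W)ˣ).val = matLin b M.inv := rfl

end Basis

/-- The subgroup of units with positive determinant. -/
noncomputable def posDet : Subgroup (W →L[ℝ] W)ˣ where
  carrier := {g : (W →L[ℝ] W)ˣ | 0 < LinearMap.det ((g : W →L[ℝ] W) : W →ₗ[ℝ] W)}
  one_mem' := by
    show (0:ℝ) < LinearMap.det (((1 : (W →L[ℝ] W)ˣ) : W →L[ℝ] W) : W →ₗ[ℝ] W)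
    rw [show (((1 : (W →L[ℝ] W)ˣ) : W →L[ℝ] W) : W →ₗ[ℝ] W) = LinearMap.id from rfl,
      LinearMap.det_id]
    norm_num
  mul_mem' := by
    intro g h hg hh
    have : ((g * h : (W →L[ℝ] W)ˣ) : W →L[ℝ] W) = (g : W →L[ℝ] W) * (h : W →L[ℝ] W) := rfl
    simp only [Set.mem_setOf_eq, this] at *
    rw [show (((g : W →L[ℝ] W) * (h : W →L[ℝ] W) : W →L[ℝ] W) : W →ₗ[ℝ] W)
        = ((g : W →L[ℝ] W) : W →ₗ[ℝ] W) * ((h : W →L[ℝ] W) : W →ₗ[ℝ] W) from rfl, map_mul]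
    exact mul_pos hg hh
  inv_mem' := by
    intro g hg
    simp only [Set.mem_setOf_eq] at *
    have h1 : LinearMap.det ((g : W →L[ℝ] W) : W →ₗ[ℝ] W)
        * LinearMap.det (((g⁻¹ : (W →L[ℝ] W)ˣ) : W →L[ℝ] W) : W →ₗ[ℝ] W) = 1 := by
      rw [← map_mul]
      have : ((g : W →L[ℝ] W) : W →ₗ[ℝ] W) * (((g⁻¹ : (W →L[ℝ] W)ˣ) : W →L[ℝ] W) : W →ₗ[ℝ] W)
          = ((((g : (W →L[ℝ] W)ˣ) * g⁻¹ : (W →L[ℝ] W)ˣ) : W →L[ℝ] W) : W →ₗ[ℝ] W) := rfl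
      rw [this, mul_inv_cancel]
      rw [show (((1 : (W →L[ℝ] W)ˣ) : W →L[ℝ] W) : W →ₗ[ℝ] W) = LinearMap.id from rfl]
      exact LinearMap.det_id
    nlinarith [h1]

/-- The canonical homomorphism from positive reals to units of `ℝ`. -/
noncomputable def posUnits : {x : ℝ // 0 < x} →* ℝˣ :=
  MonoidHom.mk' (fun c => Units.mk0 (c : ℝ) c.2.ne')
    (fun a b => by ext; rw [Units.val_mul]; exact Positive.val_mul a b)

@[simp] lemma posUnits_val (c : {x : ℝ // 0 < x}) : ((posUnits c : ℝˣ) : ℝ) = (c : ℝ) := rfl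

lemma det_unit_ne_zero (g : (W →L[ℝ] W)ˣ) :
    LinearMap.det ((g : W →L[ℝ] W) : W →ₗ[ℝ] W) ≠ 0 := by
  have h1 : LinearMap.det ((g : W →L[ℝ] W) : W →ₗ[ℝ] W)
      * LinearMap.det (((g⁻¹ : (W →L[ℝ] W)ˣ) : W →L[ℝ] W) : W →ₗ[ℝ] W) = 1 := by
    rw [← map_mul]
    have : ((g : W →L[ℝ] W) : W →ₗ[ℝ] W) * (((g⁻¹ : (W →L[ℝ] W)ˣ) : W →L[ℝ] W) : W →ₗ[ℝ] W)
        = ((((g : (W →L[ℝ] W)ˣ) * g⁻¹ : (W →L[ℝ] W)ˣ) : W →L[ℝ] W) : W →ₗ[ℝ] W) := rfl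
    rw [this, mul_inv_cancel]
    rw [show (((1 : (W →L[ℝ] W)ˣ) : W →L[ℝ] W) : W →ₗ[ℝ] W) = LinearMap.id from rfl]
    exact LinearMap.det_id
  intro h
  rw [h, zero_mul] at h1
  norm_num at h1

lemma posDet_isClosed : IsClosed ((posDet : Subgroup (W →L[ℝ] W)ˣ) : Set (W →L[ℝ] W)ˣ) := by
  have hc : Continuous fun g : (W →L[ℝ] W)ˣ =>
      LinearMap.det ((g : W →L[ℝ] W) : W →ₗ[ℝ] W) :=
    ContinuousLinearMap.continuous_det.comp Units.continuous_val
  rw [← isOpen_compl_iff]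
  have : ((posDet : Subgroup (W →L[ℝ] W)ˣ) : Set (W →L[ℝ] W)ˣ)ᶜ =
      (fun g : (W →L[ℝ] W)ˣ => LinearMap.det ((g : W →L[ℝ] W) : W →ₗ[ℝ] W)) ⁻¹' Set.Iio 0 := by
    ext g
    simp only [Set.mem_compl_iff, SetLike.mem_coe, Set.mem_preimage, Set.mem_Iio]
    rw [show (g ∈ posDet) ↔ (0 < LinearMap.det ((g : W →L[ℝ] W) : W →ₗ[ℝ] W)) from Iff.rfl]
    constructor
    · intro h
      exact lt_of_le_of_ne (not_lt.mp h) (det_unit_ne_zero g)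
    · intro h
      exact not_lt.mpr h.le
  rw [this]
  exact isOpen_Iio.preimage hc

/-- If v₁, v₂ are independent and ⟨a₁, a₂⟩ is dense in ℝ>0, then the closure of the group
generated by Fix(v₁,a₁) and Fix(v₂,a₂) is GL⁺(W). -/
theorem closure_of_two_fix_groups [FiniteDimensional ℝ W] (hW : finrank ℝ W = 2)
    (v₁ v₂ : W) (hind : LinearIndependent ℝ ![v₁, v₂]) (a₁ a₂ : {x : ℝ // 0 < x})
    (hdense : Dense ((Subgroup.closure {a₁, a₂} : Subgroup {x : ℝ // 0 < x}) :
      Set {x : ℝ // 0 < x})) :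
    closure ((Subgroup.closure (FixGrp v₁ (a₁ : ℝ) ∪ FixGrp v₂ (a₂ : ℝ)) :
        Subgroup (W →L[ℝ] W)ˣ) : Set (W →L[ℝ] W)ˣ) =
      {g : (W →L[ℝ] W)ˣ | 0 < LinearMap.det ((g : W →L[ℝ] W) : W →ₗ[ℝ] W)} := by
  classical
  have hcard : Fintype.card (Fin 2) = finrank ℝ W := by simp [hW]
  set b : Basis (Fin 2) ℝ W := basisOfLinearIndependentOfCardEqFinrank hind hcard with hbdef
  have hbc : ⇑b = ![v₁, v₂] := coe_basisOfLinearIndependentOfCardEqFinrank hind hcard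
  have hb0 : b 0 = v₁ := by rw [hbc]; rfl
  have hb1 : b 1 = v₂ := by rw [hbc]; rfl
  set G : Subgroup (W →L[ℝ] W)ˣ :=
    Subgroup.closure (FixGrp v₁ (a₁ : ℝ) ∪ FixGrp v₂ (a₂ : ℝ)) with hGdef
  -- generators
  have ha₁ : (0:ℝ) < a₁ := a₁.2
  have ha₂ : (0:ℝ) < a₂ := a₂.2
  have huU : ∀ t : ℝ, Phi b (uU t) ∈ G := by
    intro t
    apply Subgroup.subset_closure
    left
    constructor
    · rw [← hb0, Phi_apply, Fin.sum_univ_two]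
      simp
    · exact ⟨0, by rw [Phi_det]; simp [Matrix.det_fin_two_of]⟩
  have hlU : ∀ t : ℝ, Phi b (lU t) ∈ G := by
    intro t
    apply Subgroup.subset_closure
    right
    constructor
    · rw [← hb1, Phi_apply, Fin.sum_univ_two]
      simp
    · exact ⟨0, by rw [Phi_det]; simp [Matrix.det_fin_two_of]⟩
  have hd1 : ∀ n : ℤ, Phi b (dU 1 ((a₁:ℝ) ^ n) one_ne_zero (zpow_ne_zero n ha₁.ne')) ∈ G := by
    intro n
    apply Subgroup.subset_closure
    left
    constructor
    · rw [← hb0, Phi_apply, Fin.sum_univ_two]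
      simp
    · exact ⟨n, by rw [Phi_det]; simp [Matrix.det_fin_two_of]⟩
  have hd2 : ∀ n : ℤ, Phi b (dU ((a₂:ℝ) ^ n) 1 (zpow_ne_zero n ha₂.ne') one_ne_zero) ∈ G := by
    intro n
    apply Subgroup.subset_closure
    right
    constructor
    · rw [← hb1, Phi_apply, Fin.sum_univ_two]
      simp
    · exact ⟨n, by rw [Phi_det]; simp [Matrix.det_fin_two_of]⟩
  have hsl : ∀ (μ : ℝ) (hμ : μ ≠ 0), Phi b (dU μ μ⁻¹ hμ (inv_ne_zero hμ)) ∈ G := by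
    intro μ hμ
    rw [dU_sl μ hμ]
    simp only [map_mul]
    exact mul_mem (mul_mem (mul_mem (mul_mem (mul_mem (huU μ) (hlU _)) (huU μ)) (huU _))
      (hlU 1)) (huU _)
  have hnegI : Phi b (dU (-1) (-1) (by norm_num) (by norm_num)) ∈ G := by
    rw [dU_negone]
    simp only [map_mul, map_pow]
    exact pow_mem (mul_mem (mul_mem (huU 1) (hlU (-1))) (huU 1)) 2
  -- key: positive diagonal matrices are in the closure
  have key : ∀ (x y : ℝ) (hx : 0 < x) (hy : 0 < y),
      Phi b (dU x y hx.ne' hy.ne') ∈ closure (G : Set (W →L[ℝ] W)ˣ) := by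
    intro x y hx hy
    set ψ : {c : ℝ // 0 < c} → (W →L[ℝ] W)ˣ := fun c =>
      Phi b (dU x ((c:ℝ)/x) hx.ne' (div_pos c.2 hx).ne') with hψdef
    have hψcont : Continuous ψ := by
      rw [Units.continuous_iff]
      constructor
      · have : (Units.val ∘ ψ) = (matLin b) ∘ (fun c : {c : ℝ // 0 < c} =>
            (!![x, 0; 0, (c:ℝ)/x] : Matrix (Fin 2) (Fin 2) ℝ)) := rfl
        rw [this]
        refine (matLin_cont b).comp (continuous_matrix ?_)
        intro i j
        fin_cases i <;> fin_cases j <;> simp <;> fun_prop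
      · have : (fun c => ((ψ c)⁻¹ : (W →L[ℝ] W)ˣ).val) = (matLin b) ∘
            (fun c : {c : ℝ // 0 < c} =>
            (!![x⁻¹, 0; 0, ((c:ℝ)/x)⁻¹] : Matrix (Fin 2) (Fin 2) ℝ)) := rfl
        rw [this]
        refine (matLin_cont b).comp (continuous_matrix ?_)
        intro i j
        fin_cases i <;> fin_cases j <;> simp <;>
          first
          | fun_prop
          | exact continuous_const.div continuous_subtype_val (fun c => (c.2).ne')
    have hsub : ((Subgroup.closure {a₁, a₂} : Subgroup {x : ℝ // 0 < x}) :
        Set {x : ℝ // 0 < x}) ⊆ ψ ⁻¹' (closure (G : Set (W →L[ℝ] W)ˣ)) := by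
      intro c hc
      obtain ⟨m, n, hmn⟩ := Subgroup.mem_closure_pair.mp hc
      have hc' : (c : ℝ) = (a₁:ℝ) ^ m * (a₂:ℝ) ^ n := by
        have h := congrArg posUnits hmn
        rw [map_mul, map_zpow, map_zpow] at h
        have h2 := congrArg Units.val h
        rw [Units.val_mul, Units.val_zpow_eq_zpow_val, Units.val_zpow_eq_zpow_val] at h2
        simpa using h2.symm
      have hμ : x / (a₂:ℝ) ^ n ≠ 0 := (div_pos hx (zpow_pos ha₂ n)).ne'
      apply Set.mem_preimage.mpr
      apply subset_closure
      show ψ c ∈ G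
      have heq : dU x ((c:ℝ)/x) hx.ne' (div_pos c.2 hx).ne' =
          dU 1 ((a₁:ℝ) ^ m) one_ne_zero (zpow_ne_zero m ha₁.ne') *
          dU ((a₂:ℝ) ^ n) 1 (zpow_ne_zero n ha₂.ne') one_ne_zero *
          dU (x / (a₂:ℝ) ^ n) (x / (a₂:ℝ) ^ n)⁻¹ hμ (inv_ne_zero hμ) := by
        ext : 1
        show (!![x, 0; 0, (c:ℝ)/x] : Matrix (Fin 2) (Fin 2) ℝ)
            = !![1, 0; 0, (a₁:ℝ)^m] * !![(a₂:ℝ)^n, 0; 0, 1] *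
              !![x / (a₂:ℝ)^n, 0; 0, (x / (a₂:ℝ)^n)⁻¹]
        rw [Matrix.mul_fin_two, Matrix.mul_fin_two, hc']
        have h2 : (a₂:ℝ) ^ n ≠ 0 := zpow_ne_zero n ha₂.ne'
        field_simp
        try ring
        rw [mul_comm ((a₂:ℝ)^n) x, mul_inv_cancel_right₀ h2]
      show Phi b (dU x ((c:ℝ)/x) hx.ne' (div_pos c.2 hx).ne') ∈ G
      rw [heq]
      simp only [map_mul]
      exact mul_mem (mul_mem (hd1 m) (hd2 n)) (hsl _ hμ)
    have hclosedS : IsClosed (ψ ⁻¹' (closure (G : Set (W →L[ℝ] W)ˣ))) :=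
      isClosed_closure.preimage hψcont
    have huniv : ψ ⁻¹' (closure (G : Set (W →L[ℝ] W)ˣ)) = Set.univ := by
      have hdense2 : Dense (ψ ⁻¹' (closure (G : Set (W →L[ℝ] W)ˣ))) := hdense.mono hsub
      rw [← hclosedS.closure_eq, hdense2.closure_eq]
    have hmem : ψ ⟨x * y, mul_pos hx hy⟩ ∈ closure (G : Set (W →L[ℝ] W)ˣ) := by
      rw [← Set.mem_preimage, huniv]; trivial
    have hyy : dU x ((x * y)/x) hx.ne' (div_pos (mul_pos hx hy) hx).ne'
        = dU x y hx.ne' hy.ne' := by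
      ext : 1
      show (!![x, 0; 0, (x*y)/x] : Matrix (Fin 2) (Fin 2) ℝ) = !![x, 0; 0, y]
      rw [mul_div_cancel_left₀ y hx.ne']
    rw [hψdef] at hmem
    simp only at hmem
    rwa [hyy] at hmem
  -- the closure as a subgroup
  have hGC : ∀ g : (W →L[ℝ] W)ˣ, g ∈ G.topologicalClosure ↔
      g ∈ closure (G : Set (W →L[ℝ] W)ˣ) := fun g => Iff.rfl
  apply Set.Subset.antisymm
  · -- closure ⊆ posDet
    apply closure_minimal _ posDet_isClosed
    have hle : G ≤ posDet := by
      rw [hGdef]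
      apply (Subgroup.closure_le _).mpr
      rintro g (⟨-, n, hdet⟩ | ⟨-, n, hdet⟩) <;>
        exact (show (0:ℝ) < _ by rw [hdet]; positivity)
    exact fun g hg => hle hg
  · -- posDet ⊆ closure
    intro g hg
    simp only [Set.mem_setOf_eq] at hg
    set M : (Matrix (Fin 2) (Fin 2) ℝ)ˣ := (Phi b).symm g with hMdef
    have hPhiM : Phi b M = g := (Phi b).apply_symm_apply g
    have hdetM : 0 < M.val.det := by
      rw [← Phi_det b M, hPhiM]; exact hg
    set p := M.val 0 0
    set q := M.val 0 1
    set r := M.val 1 0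
    set s := M.val 1 1
    have hd : M.val.det = p * s - q * r := Matrix.det_fin_two M.val
    obtain ⟨t₀, hp'⟩ : ∃ t₀ : ℝ, p + q * t₀ ≠ 0 := by
      rcases eq_or_ne p 0 with hp | hp
      · have hq : q ≠ 0 := by
          intro hq
          rw [hd, hp, hq] at hdetM
          simp at hdetM
        exact ⟨q⁻¹, by rw [hp, mul_inv_cancel₀ hq]; norm_num⟩
      · exact ⟨0, by simpa⟩
    set p' : ℝ := p + q * t₀ with hp'def
    have hdpos : 0 < p * s - q * r := hd ▸ hdetM
    have he : (p * s - q * r) / p' ≠ 0 := div_ne_zero hdpos.ne' hp'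
    have hMeq : M = lU ((r + s * t₀) / p') * dU p' ((p * s - q * r) / p') hp' he *
        uU (q / p') * lU (-t₀) := by
      ext : 1
      show M.val = !![1, 0; (r + s * t₀)/p', 1] * !![p', 0; 0, (p*s - q*r)/p'] *
        !![1, q/p'; 0, 1] * !![1, 0; -t₀, 1]
      rw [show M.val = !![p, q; r, s] from Matrix.eta_fin_two M.val]
      exact matrix_decomp p q r s t₀ hp'
    have hdiag : Phi b (dU p' ((p * s - q * r) / p') hp' he) ∈
        closure (G : Set (W →L[ℝ] W)ˣ) := by
      rcases lt_or_gt_of_ne hp' with hneg | hpos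
      · -- p' < 0
        have hyneg : (p * s - q * r) / p' < 0 := div_neg_of_pos_of_neg hdpos hneg
        have hsplit : dU p' ((p * s - q * r) / p') hp' he =
            dU (-1) (-1) (by norm_num) (by norm_num) *
            dU (-p') (-((p * s - q * r) / p')) (neg_ne_zero.mpr hp') (neg_ne_zero.mpr he) := by
          ext : 1
          show (!![p', 0; 0, (p*s - q*r)/p'] : Matrix (Fin 2) (Fin 2) ℝ)
              = !![(-1:ℝ), 0; 0, -1] * !![-p', 0; 0, -((p*s - q*r)/p')]
          rw [Matrix.mul_fin_two]
          norm_num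
        rw [hsplit, map_mul]
        have h1 : Phi b (dU (-1) (-1) (by norm_num) (by norm_num)) ∈
            closure (G : Set (W →L[ℝ] W)ˣ) := subset_closure hnegI
        have h2 := key (-p') (-((p * s - q * r) / p')) (by linarith) (by linarith)
        exact (hGC _).mp (mul_mem ((hGC _).mpr h1) ((hGC _).mpr h2))
      · -- p' > 0
        have hypos : 0 < (p * s - q * r) / p' := div_pos hdpos hpos
        have := key p' ((p * s - q * r) / p') hpos hypos
        convert this using 3
    -- assemble
    rw [← hPhiM, hMeq]
    simp only [map_mul]
    refine (hGC _).mp ?_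
    exact mul_mem (mul_mem (mul_mem ((hGC _).mpr (subset_closure (hlU _)))
      ((hGC _).mpr hdiag)) ((hGC _).mpr (subset_closure (huU _))))
      ((hGC _).mpr (subset_closure (hlU _)))
end

section
/- Let M be a 3×3 real matrix of rank 3 with positive entries whose cross-ratio group is dense in ℝ>0. Then M has two 2×2 submatrices that are not contained in the same two rows nor in the same two columns, and whose cross-ratios generate a dense subgroup of ℝ>0. -/
/-- The cross-ratio of the 2×2 submatrix of `M` with rows `i₁,i₂` and columns `j₁,j₂`. -/
noncomputable def crr3 (M : Matrix (Fin 3) (Fin 3) ℝ) (i₁ i₂ j₁ j₂ : Fin 3) : ℝ :=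
  (M i₁ j₁ * M i₂ j₂) / (M i₁ j₂ * M i₂ j₁)

/-- The cross-ratio group of `M`: the subgroup of ℝ>0 generated by all cross-ratios of
2×2 submatrices. -/
noncomputable def CRG (M : Matrix (Fin 3) (Fin 3) ℝ) : Subgroup {x : ℝ // 0 < x} :=
  Subgroup.closure {x | ∃ i₁ i₂ j₁ j₂ : Fin 3, i₁ ≠ i₂ ∧ j₁ ≠ j₂ ∧ (x : ℝ) = crr3 M i₁ i₂ j₁ j₂}

/-!
Taking logarithms, the cross-ratio group becomes the additive subgroup of `ℝ` generated by the
second differences `L i₁ j₁ + L i₂ j₂ - L i₁ j₂ - L i₂ j₁` of `L = log M`, and these are integer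
combinations of the four "adjacent" ones `a, b, c, d` (rows `01`, `12` against columns `01`, `12`).
Two reals generate a dense subgroup of `ℝ` iff their ratio is irrational. If each of the six pairs
`(d, a)`, `(b + d, a)`, `(c + d, a)`, `(c, b)`, `(c + d, b)`, `(b + d, c)`, which come from
submatrices sharing neither their rows nor their columns, has a rational ratio, then `a, b, c, d`
lie on one `ℚ`-line, so they generate a cyclic subgroup and the cross-ratio group is not dense.
-/

open Set

local notation "ℝ>0" => {x : ℝ // 0 < x}

section LogTransfer

noncomputable def logAddHom : Additive ℝ>0 →+ ℝ where
  toFun x := Real.log (x.toMul : ℝ)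
  map_zero' := Real.log_one
  map_add' x y := Real.log_mul x.toMul.2.ne' y.toMul.2.ne'

theorem image_log_subgroupClosure (s : Set ℝ>0) :
    (fun x : ℝ>0 ↦ Real.log x) '' (Subgroup.closure s : Set ℝ>0) =
      AddSubgroup.closure ((fun x : ℝ>0 ↦ Real.log x) '' s) := by
  have h := AddMonoidHom.map_closure logAddHom (Additive.toMul ⁻¹' s)
  rw [← Subgroup.toAddSubgroup_closure] at h
  exact congrArg SetLike.coe h

theorem dense_iff_dense_image_log {A : Set ℝ>0} :
    Dense A ↔ Dense ((fun x : ℝ>0 ↦ Real.log x) '' A) := by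
  have hlog : (fun x : ℝ>0 ↦ Real.log x) = Real.expOrderIso.symm.toHomeomorph := by
    funext x
    exact Real.log_of_pos x.2
  rw [hlog]
  exact (Homeomorph.isDenseEmbedding _).dense_image.symm

theorem dense_subgroupClosure_iff_dense_log (s : Set ℝ>0) :
    Dense (Subgroup.closure s : Set ℝ>0) ↔
      Dense (AddSubgroup.closure ((fun x : ℝ>0 ↦ Real.log x) '' s) : Set ℝ) := by
  rw [dense_iff_dense_image_log, image_log_subgroupClosure]

end LogTransfer

section RationalLines

theorem mem_span_of_not_irrational_div {x y : ℝ} (hx : x ≠ 0) (h : ¬Irrational (y / x)) :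
    y ∈ ℚ ∙ x := by
  obtain ⟨q, hq⟩ := not_not.1 h
  exact Submodule.mem_span_singleton.2 ⟨q, by rw [Rat.smul_def, hq, div_mul_cancel₀ _ hx]⟩

theorem not_irrational_div_of_mem_span {x y r : ℝ} (hx : x ∈ ℚ ∙ r) (hy : y ∈ ℚ ∙ r) :
    ¬Irrational (x / y) := by
  obtain ⟨p, rfl⟩ := Submodule.mem_span_singleton.1 hx
  obtain ⟨q, rfl⟩ := Submodule.mem_span_singleton.1 hy
  rcases eq_or_ne r 0 with rfl | hr
  · simp
  · rw [Rat.smul_def, Rat.smul_def, mul_div_mul_right _ _ hr, ← Rat.cast_div]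
    exact Rat.not_irrational _

theorem not_dense_addSubgroupClosure_of_subset_span {s : Set ℝ} (hs : s.Finite) {r : ℝ}
    (hsr : s ⊆ ℚ ∙ r) : ¬Dense (AddSubgroup.closure s : Set ℝ) := by
  induction s, hs using Set.Finite.induction_on with
  | empty => simp [dense_iff_closure_eq]
  | @insert x s _ _ ih =>
    have hs : s ⊆ ℚ ∙ r := (subset_insert x s).trans hsr
    obtain ⟨g, hg⟩ := (AddSubgroup.dense_or_cyclic _).resolve_left (ih hs)
    have hg_mem : g ∈ ℚ ∙ r :=
      (AddSubgroup.closure_le (K := (ℚ ∙ r).toAddSubgroup)).2 hs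
        (hg ▸ AddSubgroup.mem_closure_singleton_self g)
    rw [insert_eq, AddSubgroup.closure_union, hg, ← AddSubgroup.closure_union, ← insert_eq,
      dense_addSubgroupClosure_pair_iff]
    exact not_irrational_div_of_mem_span (hsr (mem_insert x s)) hg_mem

theorem exists_mem_span_singleton_of_not_irrational {a b c d : ℝ} (h_da : ¬Irrational (d / a))
    (h_bda : ¬Irrational ((b + d) / a)) (h_cda : ¬Irrational ((c + d) / a))
    (h_cb : ¬Irrational (c / b)) (h_cdb : ¬Irrational ((c + d) / b))
    (h_bdc : ¬Irrational ((b + d) / c)) :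
    ∃ r : ℝ, a ∈ ℚ ∙ r ∧ b ∈ ℚ ∙ r ∧ c ∈ ℚ ∙ r ∧ d ∈ ℚ ∙ r := by
  rcases ne_or_eq a 0 with ha | rfl
  · have hd := mem_span_of_not_irrational_div ha h_da
    refine ⟨a, Submodule.mem_span_singleton_self a, ?_, ?_, hd⟩
    · simpa using sub_mem (mem_span_of_not_irrational_div ha h_bda) hd
    · simpa using sub_mem (mem_span_of_not_irrational_div ha h_cda) hd
  rcases ne_or_eq b 0 with hb | rfl
  · have hc := mem_span_of_not_irrational_div hb h_cb
    exact ⟨b, zero_mem _, Submodule.mem_span_singleton_self b, hc,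
      by simpa using sub_mem (mem_span_of_not_irrational_div hb h_cdb) hc⟩
  rcases ne_or_eq c 0 with hc | rfl
  · exact ⟨c, zero_mem _, zero_mem _, Submodule.mem_span_singleton_self c,
      by simpa using mem_span_of_not_irrational_div hc h_bdc⟩
  · exact ⟨d, zero_mem _, zero_mem _, zero_mem _, Submodule.mem_span_singleton_self d⟩

end RationalLines

section SecondDiff

variable {m n : Type*}

def secondDiff (L : Matrix m n ℝ) (i₁ i₂ : m) (j₁ j₂ : n) : ℝ :=
  L i₁ j₁ + L i₂ j₂ - L i₁ j₂ - L i₂ j₁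

@[simp]
theorem secondDiff_self_rows (L : Matrix m n ℝ) (i : m) (j₁ j₂ : n) :
    secondDiff L i i j₁ j₂ = 0 := by
  simp only [secondDiff]; ring

@[simp]
theorem secondDiff_self_cols (L : Matrix m n ℝ) (i₁ i₂ : m) (j : n) :
    secondDiff L i₁ i₂ j j = 0 := by
  simp only [secondDiff]; ring

theorem secondDiff_add_rows (L : Matrix m n ℝ) (i₁ i₂ i₃ : m) (j₁ j₂ : n) :
    secondDiff L i₁ i₂ j₁ j₂ + secondDiff L i₂ i₃ j₁ j₂ = secondDiff L i₁ i₃ j₁ j₂ := by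
  simp only [secondDiff]; ring

theorem secondDiff_add_cols (L : Matrix m n ℝ) (i₁ i₂ : m) (j₁ j₂ j₃ : n) :
    secondDiff L i₁ i₂ j₁ j₂ + secondDiff L i₁ i₂ j₂ j₃ = secondDiff L i₁ i₂ j₁ j₃ := by
  simp only [secondDiff]; ring

theorem secondDiff_eq_of_base (L : Matrix m n ℝ) (i₀ i₁ i₂ : m) (j₀ j₁ j₂ : n) :
    secondDiff L i₁ i₂ j₁ j₂ = secondDiff L i₀ i₁ j₀ j₁ + secondDiff L i₀ i₂ j₀ j₂ -
      secondDiff L i₀ i₁ j₀ j₂ - secondDiff L i₀ i₂ j₀ j₁ := by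
  simp only [secondDiff]; ring

theorem secondDiff_mem_of_adjacent_mem (L : Matrix (Fin 3) (Fin 3) ℝ) {W : AddSubgroup ℝ}
    (ha : secondDiff L 0 1 0 1 ∈ W) (hb : secondDiff L 0 1 1 2 ∈ W)
    (hc : secondDiff L 1 2 0 1 ∈ W) (hd : secondDiff L 1 2 1 2 ∈ W) (i₁ i₂ j₁ j₂ : Fin 3) :
    secondDiff L i₁ i₂ j₁ j₂ ∈ W := by
  have h₁₂ : secondDiff L 0 1 0 2 ∈ W := secondDiff_add_cols L 0 1 0 1 2 ▸ add_mem ha hb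
  have h₂₁ : secondDiff L 0 2 0 1 ∈ W := secondDiff_add_rows L 0 1 2 0 1 ▸ add_mem ha hc
  have h₂₂ : secondDiff L 0 2 0 2 ∈ W := by
    rw [← secondDiff_add_rows L 0 1 2, ← secondDiff_add_cols L 1 2 0 1 2]
    exact add_mem h₁₂ (add_mem hc hd)
  have hbase : ∀ i j, secondDiff L 0 i 0 j ∈ W := by
    intro i j
    fin_cases i <;> fin_cases j
    all_goals first | assumption | simp
  rw [secondDiff_eq_of_base L 0 i₁ i₂ 0 j₁ j₂]
  exact sub_mem (sub_mem (add_mem (hbase _ _) (hbase _ _)) (hbase _ _)) (hbase _ _)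

end SecondDiff

section CrossRatio

variable {M : Matrix (Fin 3) (Fin 3) ℝ}

theorem crr3_pos (hpos : ∀ i j, 0 < M i j) (i₁ i₂ j₁ j₂ : Fin 3) : 0 < crr3 M i₁ i₂ j₁ j₂ :=
  div_pos (mul_pos (hpos _ _) (hpos _ _)) (mul_pos (hpos _ _) (hpos _ _))

theorem log_crr3 (hpos : ∀ i j, 0 < M i j) (i₁ i₂ j₁ j₂ : Fin 3) :
    Real.log (crr3 M i₁ i₂ j₁ j₂) = secondDiff (M.map Real.log) i₁ i₂ j₁ j₂ := by
  have h (i j k l : Fin 3) : Real.log (M i j * M k l) = Real.log (M i j) + Real.log (M k l) :=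
    Real.log_mul (hpos i j).ne' (hpos k l).ne'
  rw [crr3, Real.log_div (mul_pos (hpos _ _) (hpos _ _)).ne' (mul_pos (hpos _ _) (hpos _ _)).ne',
    h, h]
  simp only [secondDiff, Matrix.map_apply]
  ring

theorem dense_closure_crr3_pair_of_irrational (hpos : ∀ i j, 0 < M i j)
    {i₁ i₂ j₁ j₂ i₁' i₂' j₁' j₂' : Fin 3}
    (h : Irrational (secondDiff (M.map Real.log) i₁ i₂ j₁ j₂ /
      secondDiff (M.map Real.log) i₁' i₂' j₁' j₂')) :
    Dense (Subgroup.closure {x : ℝ>0 |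
      (x : ℝ) = crr3 M i₁ i₂ j₁ j₂ ∨ (x : ℝ) = crr3 M i₁' i₂' j₁' j₂'} : Set ℝ>0) := by
  have hpair : {x : ℝ>0 | (x : ℝ) = crr3 M i₁ i₂ j₁ j₂ ∨ (x : ℝ) = crr3 M i₁' i₂' j₁' j₂'} =
      {⟨_, crr3_pos hpos i₁ i₂ j₁ j₂⟩, ⟨_, crr3_pos hpos i₁' i₂' j₁' j₂'⟩} := by
    ext x
    simp [Subtype.ext_iff]
  rw [dense_subgroupClosure_iff_dense_log, hpair, image_pair, dense_addSubgroupClosure_pair_iff]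
  simpa only [log_crr3 hpos] using h

theorem exists_good_submatrices_of_irrational (hpos : ∀ i j, 0 < M i j)
    {i₁ i₂ j₁ j₂ i₁' i₂' j₁' j₂' : Fin 3}
    (h : Irrational (secondDiff (M.map Real.log) i₁ i₂ j₁ j₂ /
      secondDiff (M.map Real.log) i₁' i₂' j₁' j₂'))
    (hrows : ¬(i₁ = i₁' ∧ i₂ = i₂' ∨ i₁ = i₂' ∧ i₂ = i₁'))
    (hcols : ¬(j₁ = j₁' ∧ j₂ = j₂' ∨ j₁ = j₂' ∧ j₂ = j₁')) :
    ∃ i₁ i₂ j₁ j₂ i₁' i₂' j₁' j₂' : Fin 3,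
      i₁ ≠ i₂ ∧ j₁ ≠ j₂ ∧ i₁' ≠ i₂' ∧ j₁' ≠ j₂' ∧
      ({i₁, i₂} : Set (Fin 3)) ≠ {i₁', i₂'} ∧
      ({j₁, j₂} : Set (Fin 3)) ≠ {j₁', j₂'} ∧
      Dense ((Subgroup.closure {x : {x : ℝ // 0 < x} |
          (x : ℝ) = crr3 M i₁ i₂ j₁ j₂ ∨ (x : ℝ) = crr3 M i₁' i₂' j₁' j₂'} :
        Subgroup {x : ℝ // 0 < x}) : Set {x : ℝ // 0 < x}) := by
  -- a degenerate submatrix has second difference `0`, and `x / 0 = 0 / x = 0` is rational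
  refine ⟨i₁, i₂, j₁, j₂, i₁', i₂', j₁', j₂', ?_, ?_, ?_, ?_, by rwa [Ne, pair_eq_pair_iff],
    by rwa [Ne, pair_eq_pair_iff], dense_closure_crr3_pair_of_irrational hpos h⟩ <;>
  · rintro rfl
    simp at h

theorem not_dense_CRG_of_not_irrational (hpos : ∀ i j, 0 < M i j)
    (h₁ : ¬Irrational (secondDiff (M.map Real.log) 1 2 1 2 /
      secondDiff (M.map Real.log) 0 1 0 1))
    (h₂ : ¬Irrational (secondDiff (M.map Real.log) 0 2 1 2 /
      secondDiff (M.map Real.log) 0 1 0 1))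
    (h₃ : ¬Irrational (secondDiff (M.map Real.log) 1 2 0 2 /
      secondDiff (M.map Real.log) 0 1 0 1))
    (h₄ : ¬Irrational (secondDiff (M.map Real.log) 1 2 0 1 /
      secondDiff (M.map Real.log) 0 1 1 2))
    (h₅ : ¬Irrational (secondDiff (M.map Real.log) 1 2 0 2 /
      secondDiff (M.map Real.log) 0 1 1 2))
    (h₆ : ¬Irrational (secondDiff (M.map Real.log) 0 2 1 2 /
      secondDiff (M.map Real.log) 1 2 0 1)) :
    ¬Dense (CRG M : Set ℝ>0) := by
  set L := M.map Real.log
  set adjacent : Set ℝ :=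
    {secondDiff L 0 1 0 1, secondDiff L 0 1 1 2, secondDiff L 1 2 0 1, secondDiff L 1 2 1 2}
  rw [← secondDiff_add_rows L 0 1 2] at h₂ h₆
  rw [← secondDiff_add_cols L 1 2 0 1 2] at h₃ h₅
  obtain ⟨r, ha, hb, hc, hd⟩ := exists_mem_span_singleton_of_not_irrational h₁ h₂ h₃ h₄ h₅ h₆
  have h_adjacent : adjacent ⊆ ℚ ∙ r := by
    simp only [adjacent, insert_subset_iff, singleton_subset_iff]
    exact ⟨ha, hb, hc, hd⟩
  have h_le : AddSubgroup.closure ((fun x : ℝ>0 ↦ Real.log x) '' {x | ∃ i₁ i₂ j₁ j₂ : Fin 3,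
      i₁ ≠ i₂ ∧ j₁ ≠ j₂ ∧ (x : ℝ) = crr3 M i₁ i₂ j₁ j₂}) ≤ AddSubgroup.closure adjacent := by
    rw [AddSubgroup.closure_le]
    rintro _ ⟨x, ⟨i₁, i₂, j₁, j₂, -, -, hx⟩, rfl⟩
    simp only [hx, log_crr3 hpos]
    refine secondDiff_mem_of_adjacent_mem L ?_ ?_ ?_ ?_ i₁ i₂ j₁ j₂ <;>
      exact AddSubgroup.subset_closure (by simp [adjacent])
  rw [CRG, dense_subgroupClosure_iff_dense_log]
  exact fun hdense ↦ not_dense_addSubgroupClosure_of_subset_span (toFinite adjacent) h_adjacent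
    (hdense.mono h_le)

end CrossRatio

theorem exists_good_submatrices_general (M : Matrix (Fin 3) (Fin 3) ℝ)
    (hpos : ∀ i j, 0 < M i j)
    (hdense : Dense ((CRG M : Subgroup {x : ℝ // 0 < x}) : Set {x : ℝ // 0 < x})) :
    ∃ i₁ i₂ j₁ j₂ i₁' i₂' j₁' j₂' : Fin 3,
      i₁ ≠ i₂ ∧ j₁ ≠ j₂ ∧ i₁' ≠ i₂' ∧ j₁' ≠ j₂' ∧
      ({i₁, i₂} : Set (Fin 3)) ≠ {i₁', i₂'} ∧
      ({j₁, j₂} : Set (Fin 3)) ≠ {j₁', j₂'} ∧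
      Dense ((Subgroup.closure {x : {x : ℝ // 0 < x} |
          (x : ℝ) = crr3 M i₁ i₂ j₁ j₂ ∨ (x : ℝ) = crr3 M i₁' i₂' j₁' j₂'} :
        Subgroup {x : ℝ // 0 < x}) : Set {x : ℝ // 0 < x}) := by
  set L := M.map Real.log
  by_cases h₁ : Irrational (secondDiff L 1 2 1 2 / secondDiff L 0 1 0 1)
  · exact exists_good_submatrices_of_irrational hpos h₁ (by decide) (by decide)
  by_cases h₂ : Irrational (secondDiff L 0 2 1 2 / secondDiff L 0 1 0 1)
  · exact exists_good_submatrices_of_irrational hpos h₂ (by decide) (by decide)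
  by_cases h₃ : Irrational (secondDiff L 1 2 0 2 / secondDiff L 0 1 0 1)
  · exact exists_good_submatrices_of_irrational hpos h₃ (by decide) (by decide)
  by_cases h₄ : Irrational (secondDiff L 1 2 0 1 / secondDiff L 0 1 1 2)
  · exact exists_good_submatrices_of_irrational hpos h₄ (by decide) (by decide)
  by_cases h₅ : Irrational (secondDiff L 1 2 0 2 / secondDiff L 0 1 1 2)
  · exact exists_good_submatrices_of_irrational hpos h₅ (by decide) (by decide)
  by_cases h₆ : Irrational (secondDiff L 0 2 1 2 / secondDiff L 1 2 0 1)
  · exact exists_good_submatrices_of_irrational hpos h₆ (by decide) (by decide)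
  exact absurd hdense (not_dense_CRG_of_not_irrational hpos h₁ h₂ h₃ h₄ h₅ h₆)

/-- A rank-3 positive 3×3 matrix with dense cross-ratio group has two 2×2 submatrices,
neither in the same two rows nor in the same two columns, whose cross-ratios generate a
dense subgroup of ℝ>0. -/
theorem exists_good_submatrices (M : Matrix (Fin 3) (Fin 3) ℝ)
    (hrank : M.rank = 3) (hpos : ∀ i j, 0 < M i j)
    (hdense : Dense ((CRG M : Subgroup {x : ℝ // 0 < x}) : Set {x : ℝ // 0 < x})) :
    ∃ i₁ i₂ j₁ j₂ i₁' i₂' j₁' j₂' : Fin 3,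
      i₁ ≠ i₂ ∧ j₁ ≠ j₂ ∧ i₁' ≠ i₂' ∧ j₁' ≠ j₂' ∧
      ({i₁, i₂} : Set (Fin 3)) ≠ {i₁', i₂'} ∧
      ({j₁, j₂} : Set (Fin 3)) ≠ {j₁', j₂'} ∧
      Dense ((Subgroup.closure {x : {x : ℝ // 0 < x} |
          (x : ℝ) = crr3 M i₁ i₂ j₁ j₂ ∨ (x : ℝ) = crr3 M i₁' i₂' j₁' j₂'} :
        Subgroup {x : ℝ // 0 < x}) : Set {x : ℝ // 0 < x}) :=
  exists_good_submatrices_general M hpos hdense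
end

section
/- Let Y = [[2,2,2],[0,2,2],[0,0,2]]. Then Y·Yᵀ = [[12,8,4],[8,8,4],[4,4,4]], this product has rank 3, all entries positive, and its cross-ratio group is dense in ℝ>0. -/
/-!
The cross-ratios of the 2×2 minors in rows `1, 2`, columns `0, 2` and in rows `0, 2`,
columns `0, 2` are `2` and `3`. Since `2 ^ n ≠ 3 ^ m` for positive `n, m`, the ratio
`log 3 / log 2` is irrational, so the additive subgroup of `ℝ` generated by `log 3` and `log 2`
is dense; its image under `exp` is dense in `ℝ>0` and lies in the cross-ratio group.
-/

open Real

theorem irrational_log_div_log_of_coprime {a b : ℕ} (ha : 1 < a) (hb : 1 < b)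
    (hab : a.Coprime b) : Irrational (log a / log b) := by
  have hla : 0 < log a := log_pos (by exact_mod_cast ha)
  have hlb : 0 < log b := log_pos (by exact_mod_cast hb)
  rintro ⟨q, hq⟩
  have hq0 : 0 < q := by exact_mod_cast hq ▸ div_pos hla hlb
  obtain ⟨m, hm⟩ : ∃ m : ℕ, q.num = m :=
    ⟨q.num.toNat, (Int.toNat_of_nonneg (Rat.num_pos.2 hq0).le).symm⟩
  have hlog : log ((a : ℝ) ^ q.den) = log ((b : ℝ) ^ m) := by
    rw [Rat.cast_def, hm, div_eq_div_iff (by exact_mod_cast q.den_pos.ne') hlb.ne'] at hq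
    simp only [log_pow, Int.cast_natCast] at hq ⊢
    linarith
  have hpow : a ^ q.den = b ^ m := by
    exact_mod_cast log_injOn_pos (Set.mem_Ioi.2 (by positivity)) (Set.mem_Ioi.2 (by positivity))
      hlog
  have hcop := hab.pow q.den m
  rw [hpow, Nat.coprime_self, Nat.pow_eq_one] at hcop
  rcases hcop with hb1 | hm0
  · omega
  · rw [hm0, Nat.cast_zero, Rat.num_eq_zero] at hm
    exact hq0.ne' hm

noncomputable def expPos (t : ℝ) : {x : ℝ // 0 < x} := ⟨exp t, exp_pos t⟩

theorem continuous_expPos : Continuous expPos := continuous_exp.subtype_mk _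

theorem expPos_log (x : {x : ℝ // 0 < x}) : expPos (log x) = x := Subtype.ext (exp_log x.2)

theorem surjective_expPos : Function.Surjective expPos := fun x => ⟨log x, expPos_log x⟩

theorem expPos_mem_of_mem_closure_log {S : Subgroup {x : ℝ // 0 < x}} {s : Set {x : ℝ // 0 < x}}
    (hs : s ⊆ S) {t : ℝ}
    (ht : t ∈ AddSubgroup.closure ((fun x : {x : ℝ // 0 < x} => log x) '' s)) :
    expPos t ∈ S := by
  induction ht using AddSubgroup.closure_induction with
  | mem t ht =>
    obtain ⟨x, hx, rfl⟩ := ht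
    rw [expPos_log]
    exact hs hx
  | zero =>
    rw [show expPos 0 = 1 from Subtype.ext exp_zero]
    exact S.one_mem
  | add s t _ _ hs ht =>
    rw [show expPos (s + t) = expPos s * expPos t from Subtype.ext (exp_add s t)]
    exact S.mul_mem hs ht
  | neg t _ ht =>
    rw [show expPos (-t) = (expPos t)⁻¹ from Subtype.ext (exp_neg t)]
    exact S.inv_mem ht

theorem dense_of_irrational_log_div {S : Subgroup {x : ℝ // 0 < x}} {a b : {x : ℝ // 0 < x}}
    (ha : a ∈ S) (hb : b ∈ S) (hab : Irrational (log a / log b)) :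
    Dense (S : Set {x : ℝ // 0 < x}) := by
  have hdense : Dense (AddSubgroup.closure {log a, log b} : Set ℝ) :=
    dense_addSubgroupClosure_pair_iff.2 hab
  refine (surjective_expPos.denseRange.dense_image continuous_expPos hdense).mono ?_
  rintro _ ⟨t, ht, rfl⟩
  refine expPos_mem_of_mem_closure_log (s := {a, b}) (Set.pair_subset ha hb) ?_
  rwa [Set.image_pair]

theorem mem_CRG_of_eq_crr3 {M : Matrix (Fin 3) (Fin 3) ℝ} {x : {x : ℝ // 0 < x}}
    {i₁ i₂ j₁ j₂ : Fin 3} (hi : i₁ ≠ i₂) (hj : j₁ ≠ j₂)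
    (hx : (x : ℝ) = crr3 M i₁ i₂ j₁ j₂) :
    x ∈ CRG M :=
  Subgroup.subset_closure ⟨i₁, i₂, j₁, j₂, hi, hj, hx⟩

/-- For Y = [[2,2,2],[0,2,2],[0,0,2]], the product Y·Yᵀ equals [[12,8,4],[8,8,4],[4,4,4]],
has rank 3, positive entries, and dense cross-ratio group. -/
theorem Y_mul_Yt_good :
    (!![2, 2, 2; 0, 2, 2; 0, 0, 2] : Matrix (Fin 3) (Fin 3) ℝ) *
        (!![2, 2, 2; 0, 2, 2; 0, 0, 2] : Matrix (Fin 3) (Fin 3) ℝ).transpose =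
      !![12, 8, 4; 8, 8, 4; 4, 4, 4] ∧
    (!![12, 8, 4; 8, 8, 4; 4, 4, 4] : Matrix (Fin 3) (Fin 3) ℝ).rank = 3 ∧
    (∀ i j, (0:ℝ) < !![12, 8, 4; 8, 8, 4; 4, 4, 4] i j) ∧
    Dense ((CRG !![12, 8, 4; 8, 8, 4; 4, 4, 4] : Subgroup {x : ℝ // 0 < x}) :
      Set {x : ℝ // 0 < x}) := by
  refine ⟨?_, ?_, ?_, ?_⟩
  · ext i j
    fin_cases i <;> fin_cases j <;> simp [Matrix.mul_apply, Fin.sum_univ_three] <;> norm_num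
  · have hdet : (!![12, 8, 4; 8, 8, 4; 4, 4, 4] : Matrix (Fin 3) (Fin 3) ℝ).det = 64 := by
      simp [Matrix.det_fin_three]; norm_num
    rw [Matrix.rank_of_isUnit _ (by simp [Matrix.isUnit_iff_isUnit_det, hdet]), Fintype.card_fin]
  · intro i j
    fin_cases i <;> fin_cases j <;> norm_num
  · have h3 : (⟨3, three_pos⟩ : {x : ℝ // 0 < x}) ∈ CRG !![12, 8, 4; 8, 8, 4; 4, 4, 4] :=
      mem_CRG_of_eq_crr3 (i₁ := 0) (i₂ := 2) (j₁ := 0) (j₂ := 2) (by decide) (by decide)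
        (by simp [crr3]; norm_num)
    have h2 : (⟨2, two_pos⟩ : {x : ℝ // 0 < x}) ∈ CRG !![12, 8, 4; 8, 8, 4; 4, 4, 4] :=
      mem_CRG_of_eq_crr3 (i₁ := 1) (i₂ := 2) (j₁ := 0) (j₂ := 2) (by decide) (by decide)
        (by simp [crr3]; norm_num)
    refine dense_of_irrational_log_div h3 h2 ?_
    simpa using irrational_log_div_log_of_coprime (a := 3) (b := 2) (by norm_num) (by norm_num)
      (by norm_num)
end
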